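/- arXiv:math/0503407 — 4 statements merged into one kernel-verified Lean document; each statement's English description precedes it below -/
import Mathlib

section
/- Let S be a partially ordered set with a simply connected extension (∼_u, ∼_l). Then for all a, b, c ∈ S, B_{a,b} ⊆ B_{a,c} ∪ B_{c,b}. -/
open Pointwise

namespace PaperSC

variable {S : Type*}

/-- Exactly one of four propositions holds. -/
def ExactlyOne4 (p q r s : Prop) : Prop :=
  (p ∨ q ∨ r ∨ s) ∧ (p → ¬q ∧ ¬r ∧ ¬s) ∧ (q → ¬r ∧ ¬s) ∧ (r → ¬s)

/-- `x` and `y` are incomparable with respect to the strict order `lt`. -/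
def Incomp (lt : S → S → Prop) (x y : S) : Prop :=
  x ≠ y ∧ ¬ lt x y ∧ ¬ lt y x

/-- The reflexive closure of `lt`. -/
def Le' (lt : S → S → Prop) (x y : S) : Prop := x = y ∨ lt x y

/-- `x ∼ᵤ y` : `x` and `y` are incomparable and have a common upper bound. -/
def SimU (lt : S → S → Prop) (x y : S) : Prop :=
  Incomp lt x y ∧ ∃ z, Le' lt x z ∧ Le' lt y z

/-- `x ∼ₗ y` : `x` and `y` are incomparable and have a common lower bound. -/
def SimL (lt : S → S → Prop) (x y : S) : Prop :=
  Incomp lt x y ∧ ∃ z, Le' lt z x ∧ Le' lt z y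

/-- Every incomparable pair has a common upper bound or a common lower bound. -/
def StronglyConnectedRel (lt : S → S → Prop) : Prop :=
  ∀ x y, Incomp lt x y → SimU lt x y ∨ SimL lt x y

/-- Acyclicity: `x ∼ᵤ y` and `x ∼ₗ z` imply `y < z`. -/
def AcyclicRel (lt : S → S → Prop) : Prop :=
  ∀ x y z, SimU lt x y → SimL lt x z → lt y z

/-- `(u, l)` is a simply connected extension of the strict partial order `lt`. -/
structure IsSCExt (lt u l : S → S → Prop) : Prop where
  u_symm : ∀ x y, u x y → u y x
  l_symm : ∀ x y, l x y → l y x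
  exactly_one : ∀ x y, x ≠ y → ExactlyOne4 (lt x y) (lt y x) (u x y) (l x y)
  u_of_ub : ∀ x y, Incomp lt x y → (∃ z, Le' lt x z ∧ Le' lt y z) → u x y
  l_of_lb : ∀ x y, Incomp lt x y → (∃ z, Le' lt z x ∧ Le' lt z y) → l x y
  acyclic : ∀ x y z, u x y → l x z → lt y z

/-- `b` is between `a` and `c` (with respect to `lt` and the extension `(u, l)`). -/
def Btwn (lt u l : S → S → Prop) (a c b : S) : Prop :=
  (lt a c ∧ ((lt a b ∧ lt b c) ∨ (u a b ∧ l b c))) ∨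
  (lt c a ∧ ((lt c b ∧ lt b a) ∨ (u c b ∧ l b a))) ∨
  (l a c ∧ ((l a b ∧ lt b c) ∨ (l c b ∧ lt b a))) ∨
  (u a c ∧ ((u a b ∧ lt c b) ∨ (u c b ∧ lt a b)))

/-- The between set `B_{a,b}`; it equals `{a}` when `a = b`. -/
def BSet (lt u l : S → S → Prop) (a b : S) : Set S :=
  {a, b} ∪ {x | a ≠ b ∧ Btwn lt u l a b x}

/-- The set `A` is totally ordered by `lt`. -/
def IsChainRel (lt : S → S → Prop) (A : Set S) : Prop :=
  ∀ p ∈ A, ∀ q ∈ A, p = q ∨ lt p q ∨ lt q p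

/-- `x O y` iff `B_{x,y}` is totally ordered by `lt`. -/
def ORel (lt u l : S → S → Prop) (x y : S) : Prop :=
  IsChainRel lt (BSet lt u l x y)

/-- The extension is rectifiable: every between set is a finite union of `O`-classes. -/
def Rectifiable (lt u l : S → S → Prop) : Prop :=
  ∀ a b : S, a ≠ b → ∃ F : Finset S,
    (↑F : Set S) ⊆ BSet lt u l a b ∧
    ∀ x ∈ BSet lt u l a b, ∃ c ∈ F, ORel lt u l x c

/-!
Let `x` lie strictly between `a` and `b`, distinct from `c`. Each of the four shapes of
betweenness (`a < x < b`, `a ∼ᵤ x ∼ₗ b`, `a ∼ₗ x < b`, `a ∼ᵤ x > b`, up to swapping `a`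
and `b`) meets each of the four possible relations between `c` and `x`. In every combination
either transitivity, or acyclicity, or one of two propagation rules (`c ∼ᵤ x` and `a < x`
force `a ∼ᵤ c`; dually `c ∼ₗ x` and `x < b` force `c ∼ₗ b`) places `x` between `a` and `c`
or between `c` and `b`.
-/

namespace IsSCExt

section Relations

variable {lt u l : S → S → Prop} {p q : S}

theorem rel_cases (h : IsSCExt lt u l) (hpq : p ≠ q) : lt p q ∨ lt q p ∨ u p q ∨ l p q :=
  (h.exactly_one p q hpq).1

theorem incomp_of_u (h : IsSCExt lt u l) (hpq : p ≠ q) (hu : u p q) : Incomp lt p q :=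
  ⟨hpq, fun hlt => ((h.exactly_one p q hpq).2.1 hlt).2.1 hu,
    fun hlt => ((h.exactly_one p q hpq).2.2.1 hlt).1 hu⟩

theorem incomp_of_l (h : IsSCExt lt u l) (hpq : p ≠ q) (hl : l p q) : Incomp lt p q :=
  ⟨hpq, fun hlt => ((h.exactly_one p q hpq).2.1 hlt).2.2 hl,
    fun hlt => ((h.exactly_one p q hpq).2.2.1 hlt).2 hl⟩

theorem not_l_of_u (h : IsSCExt lt u l) (hpq : p ≠ q) (hu : u p q) : ¬ l p q :=
  (h.exactly_one p q hpq).2.2.2 hu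

theorem btwn_comm (h : IsSCExt lt u l) {a c x : S} (hx : Btwn lt u l a c x) :
    Btwn lt u l c a x := by
  rcases hx with ⟨hac, hx⟩ | ⟨hca, hx⟩ | ⟨hac, hx⟩ | ⟨hac, hx⟩
  · exact .inr (.inl ⟨hac, hx⟩)
  · exact .inl ⟨hca, hx⟩
  · exact .inr (.inr (.inl ⟨h.l_symm a c hac, hx.symm⟩))
  · exact .inr (.inr (.inr ⟨h.u_symm a c hac, hx.symm⟩))

theorem btwn_or_btwn_swap (h : IsSCExt lt u l) {a b c x : S}
    (hx : Btwn lt u l b c x ∨ Btwn lt u l c a x) : Btwn lt u l a c x ∨ Btwn lt u l c b x :=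
  (hx.imp h.btwn_comm h.btwn_comm).symm

end Relations

variable [Preorder S] {u l : S → S → Prop} {a b c x : S}

theorem u_of_u_of_lt (h : IsSCExt (· < ·) u l) (hcx : c ≠ x) (hu : u c x) (hax : a < x) :
    u a c := by
  have hinc := h.incomp_of_u hcx hu
  have hac : a ≠ c := by rintro rfl; exact hinc.2.1 hax
  rcases h.rel_cases hac with hac | hca | hac | hac
  · exact absurd (h.l_of_lb c x hinc ⟨a, .inr hac, .inr hax⟩) (h.not_l_of_u hcx hu)
  · exact absurd (hca.trans hax) hinc.2.1
  · exact hac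
  · exact absurd (h.acyclic c x a hu (h.l_symm a c hac)) hax.not_gt

theorem l_of_l_of_lt (h : IsSCExt (· < ·) u l) (hcx : c ≠ x) (hl : l c x) (hxb : x < b) :
    l c b := by
  have hinc := h.incomp_of_l hcx hl
  have hcb : c ≠ b := by rintro rfl; exact hinc.2.2 hxb
  rcases h.rel_cases hcb with hcb | hbc | hcb | hcb
  · exact absurd hl (h.not_l_of_u hcx (h.u_of_ub c x hinc ⟨b, .inr hcb, .inr hxb⟩))
  · exact absurd (hxb.trans hbc) hinc.2.2
  · exact absurd (h.acyclic c b x hcb hl) hxb.not_gt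
  · exact hcb

theorem btwn_or_btwn_of_lt_of_lt (h : IsSCExt (· < ·) u l) (hcx : c ≠ x) (hax : a < x)
    (hxb : x < b) : Btwn (· < ·) u l a c x ∨ Btwn (· < ·) u l c b x := by
  rcases h.rel_cases hcx with hcx' | hxc | hu | hl
  · exact .inr (.inl ⟨hcx'.trans hxb, .inl ⟨hcx', hxb⟩⟩)
  · exact .inl (.inl ⟨hax.trans hxc, .inl ⟨hax, hxc⟩⟩)
  · exact .inl (.inr (.inr (.inr ⟨h.u_of_u_of_lt hcx hu hax, .inr ⟨hu, hax⟩⟩)))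
  · exact .inr (.inr (.inr (.inl ⟨h.l_of_l_of_lt hcx hl hxb, .inl ⟨hl, hxb⟩⟩)))

theorem btwn_or_btwn_of_u_of_l (h : IsSCExt (· < ·) u l) (hax : a ≠ x) (hxb : x ≠ b)
    (hcx : c ≠ x) (hua : u a x) (hlb : l x b) :
    Btwn (· < ·) u l a c x ∨ Btwn (· < ·) u l c b x := by
  rcases h.rel_cases hcx with hcx' | hxc | hu | hl
  · have hac := h.u_symm _ _ (h.u_of_u_of_lt hax hua hcx')
    exact .inl (.inr (.inr (.inr ⟨hac, .inl ⟨hua, hcx'⟩⟩)))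
  · have hcb := h.l_symm _ _ (h.l_of_l_of_lt hxb.symm (h.l_symm x b hlb) hxc)
    exact .inr (.inr (.inr (.inl ⟨hcb, .inr ⟨h.l_symm x b hlb, hxc⟩⟩)))
  · exact .inr (.inl ⟨h.acyclic x c b (h.u_symm c x hu) hlb, .inr ⟨hu, hlb⟩⟩)
  · have hxc := h.l_symm c x hl
    exact .inl (.inl ⟨h.acyclic x a c (h.u_symm a x hua) hxc, .inr ⟨hua, hxc⟩⟩)

theorem btwn_or_btwn_of_l_of_lt (h : IsSCExt (· < ·) u l) (hax : a ≠ x) (hcx : c ≠ x)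
    (hla : l a x) (hxb : x < b) : Btwn (· < ·) u l a c x ∨ Btwn (· < ·) u l c b x := by
  rcases h.rel_cases hcx with hcx' | hxc | hu | hl
  · exact .inr (.inl ⟨hcx'.trans hxb, .inl ⟨hcx', hxb⟩⟩)
  · exact .inl (.inr (.inr (.inl ⟨h.l_of_l_of_lt hax hla hxc, .inl ⟨hla, hxc⟩⟩)))
  · have hxa := h.l_symm a x hla
    exact .inl (.inr (.inl ⟨h.acyclic x c a (h.u_symm c x hu) hxa, .inr ⟨hu, hxa⟩⟩))
  · exact .inr (.inr (.inr (.inl ⟨h.l_of_l_of_lt hcx hl hxb, .inl ⟨hl, hxb⟩⟩)))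

theorem btwn_or_btwn_of_u_of_gt (h : IsSCExt (· < ·) u l) (hax : a ≠ x) (hcx : c ≠ x)
    (hua : u a x) (hbx : b < x) : Btwn (· < ·) u l a c x ∨ Btwn (· < ·) u l c b x := by
  rcases h.rel_cases hcx with hcx' | hxc | hu | hl
  · have hac := h.u_symm _ _ (h.u_of_u_of_lt hax hua hcx')
    exact .inl (.inr (.inr (.inr ⟨hac, .inl ⟨hua, hcx'⟩⟩)))
  · exact .inr (.inr (.inl ⟨hbx.trans hxc, .inl ⟨hbx, hxc⟩⟩))
  · have hcb := h.u_symm _ _ (h.u_of_u_of_lt hcx hu hbx)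
    exact .inr (.inr (.inr (.inr ⟨hcb, .inl ⟨hu, hbx⟩⟩)))
  · have hxc := h.l_symm c x hl
    exact .inl (.inl ⟨h.acyclic x a c (h.u_symm a x hua) hxc, .inr ⟨hua, hxc⟩⟩)

theorem btwn_or_btwn (h : IsSCExt (· < ·) u l) (hax : a ≠ x) (hxb : x ≠ b) (hcx : c ≠ x)
    (hx : Btwn (· < ·) u l a b x) : Btwn (· < ·) u l a c x ∨ Btwn (· < ·) u l c b x := by
  rcases hx with ⟨-, ⟨hax', hxb'⟩ | ⟨hua, hlb⟩⟩ | ⟨-, ⟨hbx, hxa⟩ | ⟨hub, hla⟩⟩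
    | ⟨-, ⟨hla, hxb'⟩ | ⟨hlb, hxa⟩⟩ | ⟨-, ⟨hua, hbx⟩ | ⟨hub, hax'⟩⟩
  · exact h.btwn_or_btwn_of_lt_of_lt hcx hax' hxb'
  · exact h.btwn_or_btwn_of_u_of_l hax hxb hcx hua hlb
  · exact h.btwn_or_btwn_swap (h.btwn_or_btwn_of_lt_of_lt hcx hbx hxa)
  · exact h.btwn_or_btwn_swap (h.btwn_or_btwn_of_u_of_l hxb.symm hax.symm hcx hub hla)
  · exact h.btwn_or_btwn_of_l_of_lt hax hcx hla hxb'
  · exact h.btwn_or_btwn_swap (h.btwn_or_btwn_of_l_of_lt hxb.symm hcx hlb hxa)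
  · exact h.btwn_or_btwn_of_u_of_gt hax hcx hua hbx
  · exact h.btwn_or_btwn_swap (h.btwn_or_btwn_of_u_of_gt hxb.symm hcx hub hax')

end IsSCExt

section BSet

variable {lt u l : S → S → Prop} {a b x : S}

theorem left_mem_bSet : a ∈ BSet lt u l a b := .inl (.inl rfl)

theorem right_mem_bSet : b ∈ BSet lt u l a b := .inl (.inr rfl)

theorem mem_bSet_of_btwn (hab : a ≠ b) (hx : Btwn lt u l a b x) : x ∈ BSet lt u l a b :=
  .inr ⟨hab, hx⟩

end BSet

/-- `B_{a,b} ⊆ B_{a,c} ∪ B_{c,b}` for all `a, b, c`. -/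
theorem stmt2 {S : Type*} [PartialOrder S] (u l : S → S → Prop)
    (hsce : IsSCExt ((· < ·) : S → S → Prop) u l) (a b c : S) :
    BSet ((· < ·) : S → S → Prop) u l a b ⊆
      BSet ((· < ·) : S → S → Prop) u l a c ∪ BSet ((· < ·) : S → S → Prop) u l c b := by
  intro x hx
  rcases eq_or_ne c x with rfl | hcx
  · exact .inl right_mem_bSet
  rcases hx with (rfl | rfl) | ⟨hab, hx⟩
  · exact .inl left_mem_bSet
  · exact .inr right_mem_bSet
  rcases eq_or_ne a x with rfl | hax
  · exact .inl left_mem_bSet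
  rcases eq_or_ne x b with rfl | hxb
  · exact .inr right_mem_bSet
  rcases eq_or_ne a c with rfl | hac
  · exact .inr (mem_bSet_of_btwn hab hx)
  rcases eq_or_ne c b with rfl | hcb
  · exact .inl (mem_bSet_of_btwn hab hx)
  exact (hsce.btwn_or_btwn hax hxb hcx hx).imp (mem_bSet_of_btwn hac) (mem_bSet_of_btwn hcb)

end PaperSC
end

section
/- Let S be a partially ordered set with a simply connected extension (∼_u, ∼_l). If a, b, c, d ∈ S with b ≠ c, b ∈ B_{a,c} and c ∈ B_{b,d}, then b ∈ B_{a,d} and c ∈ B_{a,d}. -/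
/-!
Call `y` *upward* from `x` when `x < y` or `x ∼ᵤ y`. For `b` different from `a` and `c`, `b` lies
between `a` and `c` exactly when one of `a`, `c` is upward from `b` and the other is not: a route
through `b` that is between its ends arrives from one side of `b` and leaves on the other. The
non-trivial half of this is that `a < b ∼ᵤ c` forces `a ∼ᵤ c` and `a ∼ₗ b < c` forces `a ∼ₗ c`.
Moreover, if `b` lies between `a` and `c`, then `c` lies on the same side of `a` as `b`. So from
`b ∈ B_{a,c}` and `c ∈ B_{b,d}`, `d` is on the side of `b` where `c` is, and `a` on the side of `c`
where `b` is, which puts `b` and `c` between `a` and `d`.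
-/

open Pointwise

namespace PaperSC

variable {S : Type*}

theorem left_mem_bset (lt u l : S → S → Prop) (a c : S) : a ∈ BSet lt u l a c :=
  Or.inl (Or.inl rfl)

theorem right_mem_bset (lt u l : S → S → Prop) (a c : S) : c ∈ BSet lt u l a c :=
  Or.inl (Or.inr rfl)

section Betweenness

variable [Preorder S] {u l : S → S → Prop} {a b c : S}

def Upward (u : S → S → Prop) (x y : S) : Prop := x < y ∨ u x y

theorem IsSCExt.not_u_of_lt (h : IsSCExt ((· < ·) : S → S → Prop) u l) (hab : a < b) : ¬ u a b :=
  ((h.exactly_one a b hab.ne).2.1 hab).2.1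

theorem IsSCExt.not_l_of_lt (h : IsSCExt ((· < ·) : S → S → Prop) u l) (hab : a < b) : ¬ l a b :=
  ((h.exactly_one a b hab.ne).2.1 hab).2.2

theorem IsSCExt.not_u_of_gt (h : IsSCExt ((· < ·) : S → S → Prop) u l) (hba : b < a) : ¬ u a b :=
  fun hu => h.not_u_of_lt hba (h.u_symm a b hu)

theorem IsSCExt.not_l_of_gt (h : IsSCExt ((· < ·) : S → S → Prop) u l) (hba : b < a) : ¬ l a b :=
  fun hl => h.not_l_of_lt hba (h.l_symm a b hl)

theorem IsSCExt.not_l_of_u_s5 (h : IsSCExt ((· < ·) : S → S → Prop) u l) (hu : u a b) : ¬ l a b :=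
  fun hl => lt_irrefl b (h.acyclic a b b hu hl)

theorem IsSCExt.incomp_of_u_s5 (h : IsSCExt ((· < ·) : S → S → Prop) u l) (hab : a ≠ b)
    (hu : u a b) : Incomp ((· < ·) : S → S → Prop) a b :=
  ⟨hab, fun hlt => h.not_u_of_lt hlt hu, fun hgt => h.not_u_of_gt hgt hu⟩

theorem IsSCExt.incomp_of_l_s5 (h : IsSCExt ((· < ·) : S → S → Prop) u l) (hab : a ≠ b)
    (hl : l a b) : Incomp ((· < ·) : S → S → Prop) a b :=
  ⟨hab, fun hlt => h.not_l_of_lt hlt hl, fun hgt => h.not_l_of_gt hgt hl⟩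

theorem IsSCExt.u_of_lt_of_u (h : IsSCExt ((· < ·) : S → S → Prop) u l) (hbc : b ≠ c)
    (hab : a < b) (hu : u b c) : u a c := by
  have hac : a ≠ c := by
    rintro rfl
    exact h.not_u_of_gt hab hu
  rcases (h.exactly_one a c hac).1 with hlt | hgt | hu' | hl
  · have hl := h.l_of_lb b c (h.incomp_of_u_s5 hbc hu) ⟨a, Or.inr hab, Or.inr hlt⟩
    exact absurd hl (h.not_l_of_u_s5 hu)
  · exact absurd hu (h.not_u_of_gt (hgt.trans hab))
  · exact hu'
  · exact absurd hab (lt_asymm (h.acyclic c b a (h.u_symm b c hu) (h.l_symm a c hl)))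

theorem IsSCExt.l_of_l_of_lt_s5 (h : IsSCExt ((· < ·) : S → S → Prop) u l) (hab : a ≠ b)
    (hl : l a b) (hbc : b < c) : l a c := by
  have hac : a ≠ c := by
    rintro rfl
    exact h.not_l_of_gt hbc hl
  rcases (h.exactly_one a c hac).1 with hlt | hgt | hu | hl'
  · have hu := h.u_of_ub a b (h.incomp_of_l_s5 hab hl) ⟨c, Or.inr hlt, Or.inr hbc⟩
    exact absurd hl (h.not_l_of_u_s5 hu)
  · exact absurd hl (h.not_l_of_gt (hbc.trans hgt))
  · exact absurd hbc (lt_asymm (h.acyclic a c b hu hl))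
  · exact hl'

theorem IsSCExt.not_upward_of_gt (h : IsSCExt ((· < ·) : S → S → Prop) u l) (hba : b < a) :
    ¬ Upward u a b := by
  rintro (hab | hu)
  · exact lt_asymm hab hba
  · exact h.not_u_of_gt hba hu

theorem IsSCExt.not_upward_of_l (h : IsSCExt ((· < ·) : S → S → Prop) u l) (hl : l a b) :
    ¬ Upward u a b := by
  rintro (hab | hu)
  · exact h.not_l_of_lt hab hl
  · exact h.not_l_of_u_s5 hu hl

theorem IsSCExt.gt_or_l_of_not_upward (h : IsSCExt ((· < ·) : S → S → Prop) u l) (hab : a ≠ b)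
    (hup : ¬ Upward u a b) : b < a ∨ l a b := by
  rcases (h.exactly_one a b hab).1 with hlt | hgt | hu | hl
  · exact absurd (Or.inl hlt) hup
  · exact Or.inl hgt
  · exact absurd (Or.inr hu) hup
  · exact Or.inr hl

theorem IsSCExt.btwn_symm (h : IsSCExt ((· < ·) : S → S → Prop) u l)
    (hb : Btwn (· < ·) u l a c b) : Btwn (· < ·) u l c a b := by
  rcases hb with hac | hca | ⟨hl, hb⟩ | ⟨hu, hb⟩
  · exact Or.inr (Or.inl hac)
  · exact Or.inl hca
  · exact Or.inr (Or.inr (Or.inl ⟨h.l_symm a c hl, hb.symm⟩))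
  · exact Or.inr (Or.inr (Or.inr ⟨h.u_symm a c hu, hb.symm⟩))

theorem IsSCExt.upward_iff_of_btwn (h : IsSCExt ((· < ·) : S → S → Prop) u l)
    (hb : Btwn (· < ·) u l a c b) : Upward u a c ↔ Upward u a b := by
  rcases hb with ⟨hac, ⟨hab, -⟩ | ⟨hu, -⟩⟩ | ⟨hca, ⟨-, hba⟩ | ⟨-, hl⟩⟩ |
    ⟨hl, ⟨hl', -⟩ | ⟨-, hba⟩⟩ | ⟨hu, ⟨hu', -⟩ | ⟨-, hab⟩⟩
  · exact iff_of_true (Or.inl hac) (Or.inl hab)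
  · exact iff_of_true (Or.inl hac) (Or.inr hu)
  · exact iff_of_false (h.not_upward_of_gt hca) (h.not_upward_of_gt hba)
  · exact iff_of_false (h.not_upward_of_gt hca) (h.not_upward_of_l (h.l_symm b a hl))
  · exact iff_of_false (h.not_upward_of_l hl) (h.not_upward_of_l hl')
  · exact iff_of_false (h.not_upward_of_l hl) (h.not_upward_of_gt hba)
  · exact iff_of_true (Or.inr hu) (Or.inr hu')
  · exact iff_of_true (Or.inr hu) (Or.inl hab)

theorem IsSCExt.xor_upward_of_btwn (h : IsSCExt ((· < ·) : S → S → Prop) u l)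
    (hb : Btwn (· < ·) u l a c b) : Xor (Upward u b a) (Upward u b c) := by
  rcases hb with ⟨-, ⟨hab, hbc⟩ | ⟨hu, hl⟩⟩ | ⟨-, ⟨hcb, hba⟩ | ⟨hu, hl⟩⟩ |
    ⟨-, ⟨hl, hbc⟩ | ⟨hl, hba⟩⟩ | ⟨-, ⟨hu, hcb⟩ | ⟨hu, hab⟩⟩
  · exact Or.inr ⟨Or.inl hbc, h.not_upward_of_gt hab⟩
  · exact Or.inl ⟨Or.inr (h.u_symm a b hu), h.not_upward_of_l hl⟩
  · exact Or.inl ⟨Or.inl hba, h.not_upward_of_gt hcb⟩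
  · exact Or.inr ⟨Or.inr (h.u_symm c b hu), h.not_upward_of_l hl⟩
  · exact Or.inr ⟨Or.inl hbc, h.not_upward_of_l (h.l_symm a b hl)⟩
  · exact Or.inl ⟨Or.inl hba, h.not_upward_of_l (h.l_symm c b hl)⟩
  · exact Or.inl ⟨Or.inr (h.u_symm a b hu), h.not_upward_of_gt hcb⟩
  · exact Or.inr ⟨Or.inr (h.u_symm c b hu), h.not_upward_of_gt hab⟩

theorem IsSCExt.btwn_of_upward_of_not_upward (h : IsSCExt ((· < ·) : S → S → Prop) u l)
    (hab : a ≠ b) (hbc : b ≠ c) (hup : Upward u b c) (hdown : ¬ Upward u b a) :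
    Btwn (· < ·) u l a c b := by
  rcases h.gt_or_l_of_not_upward hab.symm hdown, hup with ⟨hab' | hl, hbc' | hu⟩
  · exact Or.inl ⟨hab'.trans hbc', Or.inl ⟨hab', hbc'⟩⟩
  · exact Or.inr (Or.inr (Or.inr ⟨h.u_of_lt_of_u hbc hab' hu, Or.inr ⟨h.u_symm b c hu, hab'⟩⟩))
  · have hl' := h.l_symm b a hl
    exact Or.inr (Or.inr (Or.inl ⟨h.l_of_l_of_lt_s5 hab hl' hbc', Or.inl ⟨hl', hbc'⟩⟩))
  · exact Or.inr (Or.inl ⟨h.acyclic b c a hu hl, Or.inr ⟨h.u_symm b c hu, hl⟩⟩)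

theorem IsSCExt.btwn_of_xor_upward (h : IsSCExt ((· < ·) : S → S → Prop) u l)
    (hab : a ≠ b) (hbc : b ≠ c) (hx : Xor (Upward u b a) (Upward u b c)) :
    Btwn (· < ·) u l a c b := by
  rcases hx with ⟨hup, hdown⟩ | ⟨hup, hdown⟩
  · exact h.btwn_symm (h.btwn_of_upward_of_not_upward hbc.symm hab.symm hup hdown)
  · exact h.btwn_of_upward_of_not_upward hab hbc hup hdown

theorem IsSCExt.bset_comm (h : IsSCExt ((· < ·) : S → S → Prop) u l) (a c : S) :
    BSet (· < ·) u l a c = BSet (· < ·) u l c a := by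
  unfold BSet
  rw [Set.pair_comm]
  congr 1
  ext x
  exact ⟨fun ⟨hac, hx⟩ => ⟨hac.symm, h.btwn_symm hx⟩, fun ⟨hca, hx⟩ => ⟨hca.symm, h.btwn_symm hx⟩⟩

theorem IsSCExt.mem_bset_of_xor_upward (h : IsSCExt ((· < ·) : S → S → Prop) u l)
    (hx : Xor (Upward u b a) (Upward u b c)) : b ∈ BSet (· < ·) u l a c := by
  by_cases hba : b = a
  · exact hba ▸ left_mem_bset _ u l b c
  by_cases hbc : b = c
  · exact hbc ▸ right_mem_bset _ u l a b
  have hac : a ≠ c := by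
    rintro rfl
    exact (xor_self _).mp hx
  exact Or.inr ⟨hac, h.btwn_of_xor_upward (Ne.symm hba) hbc hx⟩

theorem IsSCExt.xor_upward_of_mem_bset (h : IsSCExt ((· < ·) : S → S → Prop) u l)
    (hb : b ∈ BSet (· < ·) u l a c) (hba : b ≠ a) (hbc : b ≠ c) :
    Xor (Upward u b a) (Upward u b c) := by
  rcases hb with (rfl | rfl) | ⟨-, hb⟩
  · exact absurd rfl hba
  · exact absurd rfl hbc
  · exact h.xor_upward_of_btwn hb

theorem IsSCExt.upward_iff_of_mem_bset (h : IsSCExt ((· < ·) : S → S → Prop) u l)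
    (hb : b ∈ BSet (· < ·) u l a c) (hab : a ≠ b) : Upward u a c ↔ Upward u a b := by
  rcases hb with (rfl | rfl) | ⟨-, hb⟩
  · exact absurd rfl hab
  · rfl
  · exact h.upward_iff_of_btwn hb

end Betweenness

/-- If `b ≠ c`, `b ∈ B_{a,c}` and `c ∈ B_{b,d}`, then `b, c ∈ B_{a,d}`. -/
theorem stmt5 {S : Type*} [PartialOrder S] (u l : S → S → Prop)
    (hsce : IsSCExt ((· < ·) : S → S → Prop) u l) (a b c d : S)
    (hbc : b ≠ c)
    (hb : b ∈ BSet ((· < ·) : S → S → Prop) u l a c)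
    (hc : c ∈ BSet ((· < ·) : S → S → Prop) u l b d) :
    b ∈ BSet ((· < ·) : S → S → Prop) u l a d ∧
      c ∈ BSet ((· < ·) : S → S → Prop) u l a d := by
  by_cases hba : b = a
  · subst hba
    exact ⟨left_mem_bset _ u l b d, hc⟩
  by_cases hcd : c = d
  · subst hcd
    exact ⟨hb, right_mem_bset _ u l a c⟩
  have hsides_b := hsce.xor_upward_of_mem_bset hb hba hbc
  have hsides_c := hsce.xor_upward_of_mem_bset hc (Ne.symm hbc) hcd
  have hd_side : Upward u b d ↔ Upward u b c := hsce.upward_iff_of_mem_bset hc hbc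
  have ha_side : Upward u c a ↔ Upward u c b :=
    hsce.upward_iff_of_mem_bset (hsce.bset_comm a c ▸ hb) (Ne.symm hbc)
  rw [← hd_side] at hsides_b
  rw [← ha_side] at hsides_c
  exact ⟨hsce.mem_bset_of_xor_upward hsides_b, hsce.mem_bset_of_xor_upward hsides_c⟩

end PaperSC
end

section
/- Let S be a partially ordered set with a simply connected extension (∼_u, ∼_l), and let x ≠ y in S. Then B_{x,y} equals the intersection of all paths from x to y. -/
open Pointwise

namespace PaperSC

variable {S : Type*}

/-- A path from `x` to `y`: a finite union `⋃ᵢ B_{sᵢ,tᵢ}` with `s₀ = x`, `tₙ = y`, and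
`tᵢ = sᵢ₊₁`. -/
def IsPath {S : Type*} (lt u l : S → S → Prop) (x y : S) (P : Set S) : Prop :=
  ∃ (n : ℕ) (s t : Fin (n + 1) → S),
    s 0 = x ∧ t (Fin.last n) = y ∧
    (∀ i : Fin n, t i.castSucc = s i.succ) ∧
    P = ⋃ i, BSet lt u l (s i) (t i)

/-!
Betweenness satisfies the triangle inclusion `B_{a,c} ⊆ B_{a,z} ∪ B_{z,c}` for every `z`. Applied
segment by segment, it puts `B_{x,y}` inside every path from `x` to `y`, and `B_{x,y}` is itself a
path. The inclusion is a case analysis on how `b ∈ B_{a,c}` relates to `z`: exchanging `a` and `c`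
and the duality `(<, ∼u, ∼l) ↦ (>, ∼l, ∼u)` leave three configurations of `a, b, c`, and in each
the axioms (exactly one relation, common bounds, acyclicity) force `b` into one of the two sets.
-/

namespace IsSCExt

section

variable {lt u l : S → S → Prop} {a b c x y : S}

theorem trichotomy (hs : IsSCExt lt u l) (h : x ≠ y) : lt x y ∨ lt y x ∨ u x y ∨ l x y :=
  (hs.exactly_one x y h).1

theorem swap (hs : IsSCExt lt u l) : IsSCExt (Function.swap lt) l u where
  u_symm := hs.l_symm
  l_symm := hs.u_symm
  exactly_one x y hxy := by
    have := hs.exactly_one x y hxy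
    unfold ExactlyOne4 Function.swap at *
    tauto
  u_of_ub x y := by
    rintro ⟨hne, h₁, h₂⟩ ⟨w, hx, hy⟩
    exact hs.l_of_lb x y ⟨hne, h₂, h₁⟩ ⟨w, hx.imp Eq.symm id, hy.imp Eq.symm id⟩
  l_of_lb x y := by
    rintro ⟨hne, h₁, h₂⟩ ⟨w, hx, hy⟩
    exact hs.u_of_ub x y ⟨hne, h₂, h₁⟩ ⟨w, hx.imp Eq.symm id, hy.imp Eq.symm id⟩
  acyclic x y z hl hu := hs.acyclic x z y hu hl

theorem btwn_symm_s7 (hs : IsSCExt lt u l) (h : Btwn lt u l a c b) : Btwn lt u l c a b := by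
  rcases h with h | h | ⟨hac, h⟩ | ⟨hac, h⟩
  · exact .inr (.inl h)
  · exact .inl h
  · exact .inr (.inr (.inl ⟨hs.l_symm a c hac, h.symm⟩))
  · exact .inr (.inr (.inr ⟨hs.u_symm a c hac, h.symm⟩))

theorem bSet_comm (hs : IsSCExt lt u l) : BSet lt u l a c = BSet lt u l c a := by
  have hbtwn (b : S) : Btwn lt u l a c b ↔ Btwn lt u l c a b := ⟨hs.btwn_symm_s7, hs.btwn_symm_s7⟩
  simp only [BSet, Set.pair_comm a c, ne_comm (a := a), hbtwn]

theorem btwn_swap_of_btwn (hs : IsSCExt lt u l) (h : Btwn lt u l a c b) :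
    Btwn (Function.swap lt) l u a c b := by
  rcases h with ⟨hac, h⟩ | ⟨hac, h⟩ | h | h
  · exact .inr (.inl ⟨hac, h.imp And.symm fun ⟨h₁, h₂⟩ => ⟨hs.l_symm b c h₂, hs.u_symm a b h₁⟩⟩)
  · exact .inl ⟨hac, h.imp And.symm fun ⟨h₁, h₂⟩ => ⟨hs.l_symm b a h₂, hs.u_symm c b h₁⟩⟩
  · exact .inr (.inr (.inr h))
  · exact .inr (.inr (.inl h))

theorem bSet_swap (hs : IsSCExt lt u l) : BSet (Function.swap lt) l u a c = BSet lt u l a c := by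
  have hbtwn (b : S) : Btwn (Function.swap lt) l u a c b ↔ Btwn lt u l a c b :=
    ⟨hs.swap.btwn_swap_of_btwn, hs.btwn_swap_of_btwn⟩
  simp only [BSet, hbtwn]

end

variable {lt u l : S → S → Prop} [IsStrictOrder S lt] {a b c w x y z : S}

theorem not_u_of_lt_s7 (hs : IsSCExt lt u l) (h : lt x y) : ¬ u x y :=
  ((hs.exactly_one x y (ne_of_irrefl h)).2.1 h).2.1

theorem not_l_of_lt_s7 (hs : IsSCExt lt u l) (h : lt x y) : ¬ l x y :=
  ((hs.exactly_one x y (ne_of_irrefl h)).2.1 h).2.2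

theorem not_lt_of_u (hs : IsSCExt lt u l) (h : u x y) : ¬ lt x y :=
  fun h' => hs.not_u_of_lt_s7 h' h

theorem not_lt_of_l (hs : IsSCExt lt u l) (h : l x y) : ¬ lt x y :=
  fun h' => hs.not_l_of_lt_s7 h' h

theorem not_l_of_u_s7 (hs : IsSCExt lt u l) (h : u x y) : ¬ l x y :=
  fun h' => irrefl_of lt y (hs.acyclic x y y h h')

theorem not_u_of_lt_of_lt (hs : IsSCExt lt u l) (hne : x ≠ y) (hx : lt w x) (hy : lt w y) :
    ¬ u x y := fun h =>
  hs.not_l_of_u_s7 h <| hs.l_of_lb x y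
    ⟨hne, hs.not_lt_of_u h, hs.not_lt_of_u (hs.u_symm x y h)⟩ ⟨w, .inr hx, .inr hy⟩

theorem mem_bSet_of_lt_of_lt (h₁ : lt a b) (h₂ : lt b c) : b ∈ BSet lt u l a c :=
  Set.mem_union_right _ ⟨ne_of_irrefl (trans_of lt h₁ h₂), .inl ⟨trans_of lt h₁ h₂, .inl ⟨h₁, h₂⟩⟩⟩

theorem mem_bSet_of_u_of_l (hac : lt a c) (h₁ : u a b) (h₂ : l b c) : b ∈ BSet lt u l a c :=
  Set.mem_union_right _ ⟨ne_of_irrefl hac, .inl ⟨hac, .inr ⟨h₁, h₂⟩⟩⟩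

theorem mem_bSet_of_u_of_lt (hs : IsSCExt lt u l) (hac : u a c) (h₁ : u c b) (h₂ : lt a b) :
    b ∈ BSet lt u l a c :=
  Set.mem_union_right _
    ⟨fun h => hs.not_lt_of_u (h ▸ h₁) h₂, .inr (.inr (.inr ⟨hac, .inr ⟨h₁, h₂⟩⟩))⟩

theorem mem_bSet_of_lt_of_u (hs : IsSCExt lt u l) (hab : lt a b) (hbz : u b z) (hne : b ≠ z) :
    b ∈ BSet lt u l a z := by
  have hzb := hs.u_symm b z hbz
  have haz : a ≠ z := by
    rintro rfl
    exact hs.not_lt_of_u hzb hab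
  rcases hs.trichotomy haz with h | h | h | h
  · exact absurd hbz (hs.not_u_of_lt_of_lt hne hab h)
  · exact absurd (trans_of lt h hab) (hs.not_lt_of_u hzb)
  · exact hs.mem_bSet_of_u_of_lt h hzb hab
  · exact absurd hab (asymm_of lt (hs.acyclic z b a hzb (hs.l_symm a z h)))

theorem mem_bSet_of_gt_of_l (hs : IsSCExt lt u l) (hba : lt b a) (hbz : l b z) (hne : b ≠ z) :
    b ∈ BSet lt u l a z := by
  simpa only [hs.bSet_swap] using hs.swap.mem_bSet_of_lt_of_u hba hbz hne

theorem mem_union_of_lt_of_lt (hs : IsSCExt lt u l) (h₁ : lt a b) (h₂ : lt b c) (hbz : b ≠ z) :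
    b ∈ BSet lt u l a z ∪ BSet lt u l z c := by
  rcases hs.trichotomy hbz with h | h | h | h
  · exact .inl (mem_bSet_of_lt_of_lt h₁ h)
  · exact .inr (mem_bSet_of_lt_of_lt h h₂)
  · exact .inl (hs.mem_bSet_of_lt_of_u h₁ h hbz)
  · exact .inr (hs.bSet_comm ▸ hs.mem_bSet_of_gt_of_l h₂ h hbz)

theorem mem_union_of_u_of_l (hs : IsSCExt lt u l) (h₁ : u a b) (h₂ : l b c) (hba : b ≠ a)
    (hbc : b ≠ c) (hbz : b ≠ z) : b ∈ BSet lt u l a z ∪ BSet lt u l z c := by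
  rcases hs.trichotomy hbz with h | h | h | h
  · exact .inr (hs.mem_bSet_of_gt_of_l h h₂ hbc)
  · exact .inl (hs.bSet_comm ▸ hs.mem_bSet_of_lt_of_u h (hs.u_symm a b h₁) hba)
  · exact .inr (mem_bSet_of_u_of_l (hs.acyclic b z c h h₂) (hs.u_symm b z h) h₂)
  · exact .inl (mem_bSet_of_u_of_l (hs.acyclic b a z (hs.u_symm a b h₁) h) h₁ h)

theorem mem_union_of_l_of_lt (hs : IsSCExt lt u l) (h₁ : l a b) (h₂ : lt b c) (hba : b ≠ a)
    (hbz : b ≠ z) : b ∈ BSet lt u l a z ∪ BSet lt u l z c := by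
  have hla := hs.l_symm a b h₁
  rcases hs.trichotomy hbz with h | h | h | h
  · exact .inl (hs.bSet_comm ▸ hs.mem_bSet_of_gt_of_l h hla hba)
  · exact .inr (mem_bSet_of_lt_of_lt h h₂)
  · exact .inl (hs.bSet_comm ▸ mem_bSet_of_u_of_l (hs.acyclic b z a h hla) (hs.u_symm b z h) hla)
  · exact .inr (hs.bSet_comm ▸ hs.mem_bSet_of_gt_of_l h₂ h hbz)

theorem bSet_subset_union (hs : IsSCExt lt u l) (a c z : S) :
    BSet lt u l a c ⊆ BSet lt u l a z ∪ BSet lt u l z c := by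
  intro b hb
  rcases eq_or_ne b a with rfl | hba
  · exact .inl (Set.mem_union_left _ (Set.mem_insert b _))
  rcases eq_or_ne b c with rfl | hbc
  · exact .inr (Set.mem_union_left _ (Set.mem_insert_of_mem _ rfl))
  rcases eq_or_ne b z with rfl | hbz
  · exact .inl (Set.mem_union_left _ (Set.mem_insert_of_mem _ rfl))
  obtain ⟨-, hb⟩ : a ≠ c ∧ Btwn lt u l a c b := hb.resolve_left (by simp [hba, hbc])
  have reverse : b ∈ BSet lt u l c z ∪ BSet lt u l z a → b ∈ BSet lt u l a z ∪ BSet lt u l z c := by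
    rw [Set.union_comm, hs.bSet_comm (a := c), hs.bSet_comm (a := z)]
    exact id
  have dual {p q : S} (h : b ∈ BSet (Function.swap lt) l u p z ∪ BSet (Function.swap lt) l u z q) :
      b ∈ BSet lt u l p z ∪ BSet lt u l z q := by
    rwa [hs.bSet_swap, hs.bSet_swap] at h
  rcases hb with ⟨-, h | h⟩ | ⟨-, h | h⟩ | ⟨-, h | h⟩ | ⟨-, h | h⟩
  · exact hs.mem_union_of_lt_of_lt h.1 h.2 hbz
  · exact hs.mem_union_of_u_of_l h.1 h.2 hba hbc hbz
  · exact reverse (hs.mem_union_of_lt_of_lt h.1 h.2 hbz)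
  · exact reverse (hs.mem_union_of_u_of_l h.1 h.2 hbc hba hbz)
  · exact hs.mem_union_of_l_of_lt h.1 h.2 hba hbz
  · exact reverse (hs.mem_union_of_l_of_lt h.1 h.2 hbc hbz)
  · exact dual (hs.swap.mem_union_of_l_of_lt h.1 h.2 hba hbz)
  · exact reverse (dual (hs.swap.mem_union_of_l_of_lt h.1 h.2 hbc hbz))

end IsSCExt

section Paths

variable {lt u l : S → S → Prop}

theorem isPath_bSet (x y : S) : IsPath lt u l x y (BSet lt u l x y) :=
  ⟨0, fun _ => x, fun _ => y, rfl, rfl, Fin.elim0, (Set.iUnion_const _).symm⟩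

variable [IsStrictOrder S lt]

theorem IsSCExt.bSet_subset_iUnion (hs : IsSCExt lt u l) : ∀ {n : ℕ} (s t : Fin (n + 1) → S),
    (∀ i : Fin n, t i.castSucc = s i.succ) →
    BSet lt u l (s 0) (t (Fin.last n)) ⊆ ⋃ i, BSet lt u l (s i) (t i)
  | 0, s, t, _ => Set.subset_iUnion (fun i => BSet lt u l (s i) (t i)) 0
  | n + 1, s, t, hst => by
    have tail := hs.bSet_subset_iUnion (fun i => s i.succ) (fun i => t i.succ)
      fun i => (congrArg t (Fin.succ_castSucc i)).trans (hst i.succ)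
    rw [Set.iUnion_fin_add_one_eq_iUnion_succ]
    refine (hs.bSet_subset_union _ _ (t 0)).trans (Set.union_subset_union_right _ ?_)
    rw [show t 0 = s 1 from hst 0, ← Fin.succ_last]
    exact tail

theorem IsPath.bSet_subset (hs : IsSCExt lt u l) {x y : S} {P : Set S}
    (hP : IsPath lt u l x y P) : BSet lt u l x y ⊆ P := by
  obtain ⟨n, s, t, rfl, rfl, hst, rfl⟩ := hP
  exact hs.bSet_subset_iUnion s t hst

end Paths

theorem stmt7_general {S : Type*} [PartialOrder S] (u l : S → S → Prop)
    (hsce : IsSCExt ((· < ·) : S → S → Prop) u l) (x y : S) :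
    BSet ((· < ·) : S → S → Prop) u l x y =
      ⋂₀ {P : Set S | IsPath ((· < ·) : S → S → Prop) u l x y P} :=
  (Set.subset_sInter fun _ hP => hP.bSet_subset hsce).antisymm
    (Set.sInter_subset_of_mem (isPath_bSet x y))

/-- `B_{x,y}` is the intersection of all paths from `x` to `y`. -/
theorem stmt7 {S : Type*} [PartialOrder S] (u l : S → S → Prop)
    (hsce : IsSCExt ((· < ·) : S → S → Prop) u l) (x y : S) (hxy : x ≠ y) :
    BSet ((· < ·) : S → S → Prop) u l x y =
      ⋂₀ {P : Set S | IsPath ((· < ·) : S → S → Prop) u l x y P} :=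
  stmt7_general u l hsce x y

end PaperSC
end

section
/- Let G be a group with a left-invariant partial order < admitting a left-invariant simply connected extension (∼_u, ∼_l) which is rectifiable, and let H be a completely convex normal subgroup of G. Then the relation <' is a left-invariant partial order on the quotient group G/H, and (∼_u', ∼_l') is a rectifiable left-invariant simply connected extension of <'. -/
open Pointwise

namespace PaperSC

variable {S : Type*}

/-- A relation on a group is left-invariant. -/
def LeftInvariant {G : Type*} [Group G] (r : G → G → Prop) : Prop :=
  ∀ f g h : G, r g h → r (f * g) (f * h)

/-- A subgroup `H` is completely convex: between sets of elements of `H` lie in `H`. -/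
def CompletelyConvex {G : Type*} [Group G] (lt u l : G → G → Prop) (H : Subgroup G) : Prop :=
  ∀ h1 ∈ H, ∀ h2 ∈ H, BSet lt u l h1 h2 ⊆ (H : Set G)

/-- The relation induced on the quotient `G ⧸ H` by a relation `r` on `G`:
`g₁H r' g₂H` iff the cosets are distinct and `r g₁ (g₂ h)` for some `h ∈ H`. -/
def QRel {G : Type*} [Group G] (r : G → G → Prop) (H : Subgroup G) (x y : G ⧸ H) : Prop :=
  x ≠ y ∧ ∃ g1 g2 : G, (g1 : G ⧸ H) = x ∧ (g2 : G ⧸ H) = y ∧ ∃ h ∈ H, r g1 (g2 * h)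

/-! For `g ∉ kH` the relation (`<`, `>`, `∼ᵤ` or `∼ₗ`) between `g` and `kh` does not depend on
`h ∈ H`: otherwise `g`, or in the case `<` against `∼ᵤ` an element obtained from it by translating
and conjugating (here normality enters), would lie between two elements of one coset, hence in that
coset by complete convexity. So a relation between cosets holds iff it holds between any chosen
representatives, and the axioms, the between sets and rectifiability all descend to `G ⧸ H`.
Reversing the order and swapping `∼ᵤ` with `∼ₗ` preserves every hypothesis, which halves the case
analysis. -/

section Relations

variable {lt u l : S → S → Prop}

theorem ExactlyOne4.swap {p q r s : Prop} (h : ExactlyOne4 p q r s) : ExactlyOne4 q p s r := by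
  unfold ExactlyOne4 at *
  tauto

theorem le'_flip_iff {x y : S} : Le' (flip lt) x y ↔ Le' lt y x := by
  simp only [Le', flip, eq_comm]

theorem Incomp.lt_of_le'_upper {x y z : S} (h : Incomp lt x y) (hx : Le' lt x z)
    (hy : Le' lt y z) : lt x z ∧ lt y z := by
  rcases hx with rfl | hx
  · rcases hy with rfl | hy
    exacts [absurd rfl h.1, absurd hy h.2.2]
  · rcases hy with rfl | hy
    exacts [absurd hx h.2.1, ⟨hx, hy⟩]

theorem Incomp.lt_of_le'_lower {x y z : S} (h : Incomp lt x y) (hx : Le' lt z x)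
    (hy : Le' lt z y) : lt z x ∧ lt z y := by
  rcases hx with rfl | hx
  · rcases hy with rfl | hy
    exacts [absurd rfl h.1, absurd hy h.2.1]
  · rcases hy with rfl | hy
    exacts [absurd hx h.2.2, ⟨hx, hy⟩]

theorem IsSCExt.incomp_of_u_s11 (h : IsSCExt lt u l) {x y : S} (hne : x ≠ y) (hu : u x y) :
    Incomp lt x y := by
  have := h.exactly_one x y hne
  unfold ExactlyOne4 at this
  exact ⟨hne, by tauto, by tauto⟩

theorem IsSCExt.incomp_of_l_s11 (h : IsSCExt lt u l) {x y : S} (hne : x ≠ y) (hl : l x y) :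
    Incomp lt x y := by
  have := h.exactly_one x y hne
  unfold ExactlyOne4 at this
  exact ⟨hne, by tauto, by tauto⟩

theorem IsSCExt.not_l_of_u_s11 (h : IsSCExt lt u l) {x y : S} (hne : x ≠ y) (hu : u x y) :
    ¬ l x y :=
  (h.exactly_one x y hne).2.2.2 hu

theorem IsSCExt.dual (h : IsSCExt lt u l) : IsSCExt (flip lt) l u where
  u_symm := h.l_symm
  l_symm := h.u_symm
  exactly_one x y hne := (h.exactly_one x y hne).swap
  u_of_ub x y hxy := by
    simp only [le'_flip_iff]
    exact h.l_of_lb x y ⟨hxy.1, hxy.2.2, hxy.2.1⟩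
  l_of_lb x y hxy := by
    simp only [le'_flip_iff]
    exact h.u_of_ub x y ⟨hxy.1, hxy.2.2, hxy.2.1⟩
  acyclic x y z hl hu := h.acyclic x z y hu hl

theorem Btwn.mono {lt' u' l' : S → S → Prop} (hlt : ∀ x y, lt x y → lt' x y)
    (hu : ∀ x y, u x y → u' x y) (hl : ∀ x y, l x y → l' x y) {a c b : S}
    (h : Btwn lt u l a c b) : Btwn lt' u' l' a c b := by
  unfold Btwn at *
  aesop

theorem Btwn.restrict {p : S → S → Prop} (hp : ∀ x y, p x y → p y x) {a c b : S}
    (hac : p a c) (hab : p a b) (hcb : p c b) (h : Btwn lt u l a c b) :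
    Btwn (fun x y => p x y ∧ lt x y) (fun x y => p x y ∧ u x y)
      (fun x y => p x y ∧ l x y) a c b := by
  have := hp _ _ hac
  have := hp _ _ hab
  have := hp _ _ hcb
  unfold Btwn at *
  aesop

theorem btwn_dual_iff (hu : ∀ x y, u x y → u y x) (hl : ∀ x y, l x y → l y x) {a c b : S} :
    Btwn (flip lt) l u a c b ↔ Btwn lt u l a c b := by
  have hu' : ∀ x y, u x y ↔ u y x := fun x y => ⟨hu x y, hu y x⟩
  have hl' : ∀ x y, l x y ↔ l y x := fun x y => ⟨hl x y, hl y x⟩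
  simp only [Btwn, flip, hu' b c, hu' b a, hl' a b, hl' c b]
  aesop

theorem bset_dual (hu : ∀ x y, u x y → u y x) (hl : ∀ x y, l x y → l y x) (a b : S) :
    BSet (flip lt) l u a b = BSet lt u l a b := by
  simp only [BSet, btwn_dual_iff hu hl]

theorem bset_self (a : S) : BSet lt u l a a = {a} := by
  simp [BSet]

end Relations

section Group

variable {G : Type*} [Group G]

structure IsLeftInvSCExt (lt u l : G → G → Prop) : Prop extends IsSCExt lt u l where
  irrefl : ∀ x, ¬ lt x x
  trans : ∀ x y z, lt x y → lt y z → lt x z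
  lt_inv : LeftInvariant lt
  u_inv : LeftInvariant u
  l_inv : LeftInvariant l

variable {lt u l : G → G → Prop} {H : Subgroup G}

theorem IsLeftInvSCExt.asymm (hG : IsLeftInvSCExt lt u l) {x y : G} (h : lt x y) : ¬ lt y x :=
  fun h' => hG.irrefl x (hG.trans x y x h h')

theorem IsLeftInvSCExt.dual (hG : IsLeftInvSCExt lt u l) : IsLeftInvSCExt (flip lt) l u where
  toIsSCExt := hG.toIsSCExt.dual
  irrefl := hG.irrefl
  trans x y z hxy hyz := hG.trans z y x hyz hxy
  lt_inv f x y := hG.lt_inv f y x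
  u_inv := hG.l_inv
  l_inv := hG.u_inv

theorem CompletelyConvex.dual (hG : IsSCExt lt u l) (hcc : CompletelyConvex lt u l H) :
    CompletelyConvex (flip lt) l u H := by
  intro a ha b hb
  rw [bset_dual hG.u_symm hG.l_symm]
  exact hcc a ha b hb

theorem mul_mem_bset (hG : IsLeftInvSCExt lt u l) (g : G) {a b x : G}
    (hx : x ∈ BSet lt u l a b) : g * x ∈ BSet lt u l (g * a) (g * b) := by
  rcases hx with (rfl | rfl) | ⟨hab, hx⟩
  · exact .inl (.inl rfl)
  · exact .inl (.inr rfl)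
  · exact .inr ⟨by simpa using hab,
      hx.mono (lt' := fun x y => lt (g * x) (g * y)) (u' := fun x y => u (g * x) (g * y))
        (l' := fun x y => l (g * x) (g * y)) (hG.lt_inv g) (hG.u_inv g) (hG.l_inv g)⟩

theorem mk_eq_of_mem_bset (hG : IsLeftInvSCExt lt u l) (hcc : CompletelyConvex lt u l H)
    {p q x : G} (hpq : (p : G ⧸ H) = q) (hx : x ∈ BSet lt u l p q) : (x : G ⧸ H) = p := by
  have hx' := mul_mem_bset hG p⁻¹ hx
  rw [inv_mul_cancel] at hx'
  exact (QuotientGroup.eq.mpr (hcc 1 H.one_mem _ (QuotientGroup.eq.mp hpq) hx')).symm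

theorem mk_eq_of_lt_of_lt (hG : IsLeftInvSCExt lt u l) (hcc : CompletelyConvex lt u l H)
    {x y y' : G} (hlt : lt x y) (hlt' : lt y' x) (hyy : (y : G ⧸ H) = y') :
    (x : G ⧸ H) = y := by
  have hne : y' ≠ y := fun h => hG.irrefl x (hG.trans _ _ _ hlt (h ▸ hlt'))
  have hx : x ∈ BSet lt u l y' y :=
    .inr ⟨hne, .inl ⟨hG.trans _ _ _ hlt' hlt, .inl ⟨hlt', hlt⟩⟩⟩
  rw [mk_eq_of_mem_bset hG hcc hyy.symm hx, hyy]

theorem mk_eq_of_lt_of_l (hG : IsLeftInvSCExt lt u l) (hcc : CompletelyConvex lt u l H)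
    {x y y' : G} (hlt : lt x y) (hl : l x y') (hyy : (y : G ⧸ H) = y') :
    (x : G ⧸ H) = y := by
  rcases eq_or_ne x y' with rfl | hxy'
  · exact hyy.symm
  have hinc := hG.incomp_of_l_s11 hxy' hl
  rcases eq_or_ne y y' with rfl | hne
  · exact absurd hlt hinc.2.1
  rcases (hG.exactly_one y y' hne).1 with h | h | h | h
  · exact absurd (hG.trans _ _ _ hlt h) hinc.2.1
  · exact absurd hl (hG.not_l_of_u_s11 hxy' (hG.u_of_ub x y' hinc ⟨y, .inr hlt, .inr h⟩))
  · exact absurd (hG.acyclic y' y x (hG.u_symm _ _ h) (hG.l_symm _ _ hl)) (hG.asymm hlt)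
  · have hx : Btwn lt u l y y' x := .inr (.inr (.inl ⟨h, .inr ⟨hG.l_symm _ _ hl, hlt⟩⟩))
    exact mk_eq_of_mem_bset hG hcc hyy (.inr ⟨hne, hx⟩)

theorem mk_eq_of_u_of_l (hG : IsLeftInvSCExt lt u l) (hcc : CompletelyConvex lt u l H)
    {x y y' : G} (hu : u x y) (hl : l x y') (hyy : (y : G ⧸ H) = y') :
    (x : G ⧸ H) = y := by
  have hlt := hG.acyclic x y y' hu hl
  have hne : y ≠ y' := by rintro rfl; exact hG.irrefl y hlt
  exact mk_eq_of_mem_bset hG hcc hyy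
    (.inr ⟨hne, .inl ⟨hlt, .inr ⟨hG.u_symm _ _ hu, hl⟩⟩⟩)

theorem mk_eq_of_gt_of_u (hG : IsLeftInvSCExt lt u l) (hcc : CompletelyConvex lt u l H)
    {x y y' : G} (hlt : lt y x) (hu : u x y') (hyy : (y : G ⧸ H) = y') :
    (x : G ⧸ H) = y :=
  mk_eq_of_lt_of_l hG.dual (hcc.dual hG.toIsSCExt) hlt hu hyy

theorem qrel_mk_of_ne {r : G → G → Prop} {x y : G} (hne : (x : G ⧸ H) ≠ y) (h : r x y) :
    QRel r H x y :=
  ⟨hne, x, y, rfl, rfl, 1, H.one_mem, by simpa using h⟩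

theorem incomp_of_incomp_mk {x y : G} (h : Incomp (QRel lt H) x y) : Incomp lt x y :=
  ⟨fun hxy => h.1 (congrArg _ hxy), fun hlt => h.2.1 (qrel_mk_of_ne h.1 hlt),
    fun hlt => h.2.2 (qrel_mk_of_ne (Ne.symm h.1) hlt)⟩

section Normal

variable [H.Normal]

theorem mem_of_u_one_of_lt (hG : IsLeftInvSCExt lt u l) (hcc : CompletelyConvex lt u l H)
    {t k : G} (hu : u 1 t) (hlt : lt t k) (hk : k ∈ H) : t ∈ H := by
  by_cases ht : t = 1
  · exact ht ▸ H.one_mem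
  have hs : u 1 t⁻¹ := hG.u_symm _ _ (by simpa using hG.u_inv t⁻¹ 1 t hu)
  have hs1 : (1 : G) ≠ t⁻¹ := by simpa [eq_comm] using ht
  have hinc := hG.incomp_of_u_s11 hs1 hs
  -- by normality `m ∈ H`, and `t⁻¹` lies between `1` and `m`
  set m := t⁻¹ * k⁻¹ * t
  have hm : m ∈ H := by simpa using Subgroup.Normal.conj_mem ‹_› k⁻¹ (H.inv_mem hk) t⁻¹
  have hms : lt m t⁻¹ := by simpa [m, mul_assoc] using hG.lt_inv (t⁻¹ * k⁻¹) t k hlt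
  have h1m : (1 : G) ≠ m := fun h => hinc.2.1 (h ▸ hms)
  have hum : u 1 m := by
    rcases (hG.exactly_one 1 m h1m).1 with h | h | h | h
    · exact absurd (hG.trans _ _ _ h hms) hinc.2.1
    · exact absurd (hG.l_of_lb 1 t⁻¹ hinc ⟨m, .inr h, .inr hms⟩) (hG.not_l_of_u_s11 hs1 hs)
    · exact h
    · exact absurd hms (hG.asymm (hG.acyclic 1 t⁻¹ m hs h))
  have hmem : t⁻¹ ∈ BSet lt u l 1 m :=
    .inr ⟨h1m, .inr (.inr (.inr ⟨hum, .inl ⟨hs, hms⟩⟩))⟩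
  exact H.inv_mem_iff.mp (hcc 1 H.one_mem m hm hmem)

theorem mk_eq_of_lt_of_u (hG : IsLeftInvSCExt lt u l) (hcc : CompletelyConvex lt u l H)
    {x y y' : G} (hlt : lt x y) (hu : u x y') (hyy : (y : G ⧸ H) = y') :
    (x : G ⧸ H) = y := by
  have hu' : u 1 (y'⁻¹ * x) := by simpa using hG.u_inv y'⁻¹ _ _ (hG.u_symm _ _ hu)
  have hmem := mem_of_u_one_of_lt hG hcc hu' (hG.lt_inv y'⁻¹ _ _ hlt)
    (QuotientGroup.eq.mp hyy.symm)
  exact (QuotientGroup.eq.mpr hmem).symm.trans hyy.symm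

theorem lt_of_lt_of_mk_eq (hG : IsLeftInvSCExt lt u l) (hcc : CompletelyConvex lt u l H)
    {x y y' : G} (hxy : (x : G ⧸ H) ≠ y) (hyy : (y : G ⧸ H) = y') (hlt : lt x y) :
    lt x y' := by
  have hxy' : x ≠ y' := by rintro rfl; exact hxy hyy.symm
  rcases (hG.exactly_one x y' hxy').1 with h | h | h | h
  · exact h
  · exact absurd (mk_eq_of_lt_of_lt hG hcc hlt h hyy) hxy
  · exact absurd (mk_eq_of_lt_of_u hG hcc hlt h hyy) hxy
  · exact absurd (mk_eq_of_lt_of_l hG hcc hlt h hyy) hxy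

theorem u_of_u_of_mk_eq (hG : IsLeftInvSCExt lt u l) (hcc : CompletelyConvex lt u l H)
    {x y y' : G} (hxy : (x : G ⧸ H) ≠ y) (hyy : (y : G ⧸ H) = y') (hu : u x y) :
    u x y' := by
  have hxy' : x ≠ y' := by rintro rfl; exact hxy hyy.symm
  rcases (hG.exactly_one x y' hxy').1 with h | h | h | h
  · exact absurd ((mk_eq_of_lt_of_u hG hcc h hu hyy.symm).trans hyy.symm) hxy
  · exact absurd ((mk_eq_of_gt_of_u hG hcc h hu hyy.symm).trans hyy.symm) hxy
  · exact h
  · exact absurd (mk_eq_of_u_of_l hG hcc hu h hyy) hxy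

theorem l_of_l_of_mk_eq (hG : IsLeftInvSCExt lt u l) (hcc : CompletelyConvex lt u l H)
    {x y y' : G} (hxy : (x : G ⧸ H) ≠ y) (hyy : (y : G ⧸ H) = y') (hl : l x y) :
    l x y' :=
  u_of_u_of_mk_eq hG.dual (hcc.dual hG.toIsSCExt) hxy hyy hl

theorem qrel_mk_iff {r : G → G → Prop} (hr : LeftInvariant r)
    (hrigid : ∀ {x y y' : G}, (x : G ⧸ H) ≠ y → (y : G ⧸ H) = y' → r x y → r x y')
    {x y : G} : QRel r H x y ↔ (x : G ⧸ H) ≠ y ∧ r x y := by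
  refine ⟨fun ⟨hne, g₁, g₂, h₁, h₂, h, hh, hr'⟩ => ⟨hne, ?_⟩, fun h => qrel_mk_of_ne h.1 h.2⟩
  have hy : ((x * g₁⁻¹ * (g₂ * h) : G) : G ⧸ H) = y := by
    simp [h₁, h₂, QuotientGroup.mk_mul_of_mem _ hh]
  refine hrigid (hy ▸ hne) hy ?_
  simpa [mul_assoc] using hr (x * g₁⁻¹) g₁ (g₂ * h) hr'

theorem qrel_lt_mk_iff (hG : IsLeftInvSCExt lt u l) (hcc : CompletelyConvex lt u l H)
    {x y : G} : QRel lt H x y ↔ (x : G ⧸ H) ≠ y ∧ lt x y :=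
  qrel_mk_iff hG.lt_inv (lt_of_lt_of_mk_eq hG hcc)

theorem qrel_u_mk_iff (hG : IsLeftInvSCExt lt u l) (hcc : CompletelyConvex lt u l H)
    {x y : G} : QRel u H x y ↔ (x : G ⧸ H) ≠ y ∧ u x y :=
  qrel_mk_iff hG.u_inv (u_of_u_of_mk_eq hG hcc)

theorem qrel_l_mk_iff (hG : IsLeftInvSCExt lt u l) (hcc : CompletelyConvex lt u l H)
    {x y : G} : QRel l H x y ↔ (x : G ⧸ H) ≠ y ∧ l x y :=
  qrel_mk_iff hG.l_inv (l_of_l_of_mk_eq hG hcc)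

theorem LeftInvariant.qrel {r : G → G → Prop} (hr : LeftInvariant r) :
    LeftInvariant (QRel r H) := by
  rintro F X Y ⟨hne, g₁, g₂, rfl, rfl, h, hh, hr'⟩
  obtain ⟨f, rfl⟩ := QuotientGroup.mk_surjective F
  exact ⟨fun e => hne (mul_left_cancel e), f * g₁, f * g₂, rfl, rfl, h, hh,
    by simpa [mul_assoc] using hr f _ _ hr'⟩

theorem qrel_lt_trans (hG : IsLeftInvSCExt lt u l) (hcc : CompletelyConvex lt u l H)
    {X Y Z : G ⧸ H} (hXY : QRel lt H X Y) (hYZ : QRel lt H Y Z) :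
    QRel lt H X Z := by
  obtain ⟨x, rfl⟩ := QuotientGroup.mk_surjective X
  obtain ⟨y, rfl⟩ := QuotientGroup.mk_surjective Y
  obtain ⟨z, rfl⟩ := QuotientGroup.mk_surjective Z
  rw [qrel_lt_mk_iff hG hcc] at *
  refine ⟨fun hxz => ?_, hG.trans _ _ _ hXY.2 hYZ.2⟩
  exact hG.asymm hXY.2 (lt_of_lt_of_mk_eq hG hcc hYZ.1 hxz.symm hYZ.2)

theorem isSCExt_quotient (hG : IsLeftInvSCExt lt u l) (hcc : CompletelyConvex lt u l H) :
    IsSCExt (QRel lt H) (QRel u H) (QRel l H) where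
  u_symm X Y h := by
    obtain ⟨x, rfl⟩ := QuotientGroup.mk_surjective X
    obtain ⟨y, rfl⟩ := QuotientGroup.mk_surjective Y
    rw [qrel_u_mk_iff hG hcc] at *
    exact ⟨h.1.symm, hG.u_symm _ _ h.2⟩
  l_symm X Y h := by
    obtain ⟨x, rfl⟩ := QuotientGroup.mk_surjective X
    obtain ⟨y, rfl⟩ := QuotientGroup.mk_surjective Y
    rw [qrel_l_mk_iff hG hcc] at *
    exact ⟨h.1.symm, hG.l_symm _ _ h.2⟩
  exactly_one X Y hne := by
    obtain ⟨x, rfl⟩ := QuotientGroup.mk_surjective X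
    obtain ⟨y, rfl⟩ := QuotientGroup.mk_surjective Y
    simp only [qrel_lt_mk_iff hG hcc, qrel_u_mk_iff hG hcc, qrel_l_mk_iff hG hcc, ne_eq, hne,
      hne.symm, not_false_eq_true, true_and]
    exact hG.exactly_one x y fun h => hne (congrArg _ h)
  u_of_ub X Y hinc := by
    rintro ⟨Z, hXZ, hYZ⟩
    obtain ⟨x, rfl⟩ := QuotientGroup.mk_surjective X
    obtain ⟨y, rfl⟩ := QuotientGroup.mk_surjective Y
    obtain ⟨z, rfl⟩ := QuotientGroup.mk_surjective Z
    obtain ⟨hxz, hyz⟩ := hinc.lt_of_le'_upper hXZ hYZ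
    rw [qrel_lt_mk_iff hG hcc] at hxz hyz
    exact qrel_mk_of_ne hinc.1 <| hG.u_of_ub x y (incomp_of_incomp_mk hinc)
      ⟨z, .inr hxz.2, .inr hyz.2⟩
  l_of_lb X Y hinc := by
    rintro ⟨Z, hZX, hZY⟩
    obtain ⟨x, rfl⟩ := QuotientGroup.mk_surjective X
    obtain ⟨y, rfl⟩ := QuotientGroup.mk_surjective Y
    obtain ⟨z, rfl⟩ := QuotientGroup.mk_surjective Z
    obtain ⟨hzx, hzy⟩ := hinc.lt_of_le'_lower hZX hZY
    rw [qrel_lt_mk_iff hG hcc] at hzx hzy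
    exact qrel_mk_of_ne hinc.1 <| hG.l_of_lb x y (incomp_of_incomp_mk hinc)
      ⟨z, .inr hzx.2, .inr hzy.2⟩
  acyclic X Y Z hu hl := by
    obtain ⟨x, rfl⟩ := QuotientGroup.mk_surjective X
    obtain ⟨y, rfl⟩ := QuotientGroup.mk_surjective Y
    obtain ⟨z, rfl⟩ := QuotientGroup.mk_surjective Z
    rw [qrel_u_mk_iff hG hcc] at hu
    rw [qrel_l_mk_iff hG hcc] at hl
    refine qrel_mk_of_ne (fun hyz => ?_) (hG.acyclic x y z hu.2 hl.2)
    exact hu.1 (mk_eq_of_u_of_l hG hcc hu.2 hl.2 hyz)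

theorem btwn_mk_iff (hG : IsLeftInvSCExt lt u l) (hcc : CompletelyConvex lt u l H)
    {a c b : G} :
    Btwn (QRel lt H) (QRel u H) (QRel l H) a c b ↔
      Btwn (fun x y : G => (x : G ⧸ H) ≠ y ∧ lt x y) (fun x y : G => (x : G ⧸ H) ≠ y ∧ u x y)
        (fun x y : G => (x : G ⧸ H) ≠ y ∧ l x y) a c b := by
  simp only [Btwn, qrel_lt_mk_iff hG hcc, qrel_u_mk_iff hG hcc, qrel_l_mk_iff hG hcc]

theorem exists_mk_eq_of_mem_bset_mk (hG : IsLeftInvSCExt lt u l)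
    (hcc : CompletelyConvex lt u l H) {a b : G} {X : G ⧸ H}
    (hX : X ∈ BSet (QRel lt H) (QRel u H) (QRel l H) a b) :
    ∃ x : G, (x : G ⧸ H) = X ∧ x ∈ BSet lt u l a b := by
  rcases hX with (rfl | rfl) | ⟨hab, hX⟩
  · exact ⟨a, rfl, .inl (.inl rfl)⟩
  · exact ⟨b, rfl, .inl (.inr rfl)⟩
  obtain ⟨x, rfl⟩ := QuotientGroup.mk_surjective X
  refine ⟨x, rfl, .inr ⟨fun h => hab (congrArg _ h), ?_⟩⟩
  exact ((btwn_mk_iff hG hcc).mp hX).mono (fun _ _ => And.right) (fun _ _ => And.right)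
    (fun _ _ => And.right)

theorem mk_mem_bset_mk (hG : IsLeftInvSCExt lt u l) (hcc : CompletelyConvex lt u l H)
    {a b x : G} (hab : (a : G ⧸ H) ≠ b) (hx : x ∈ BSet lt u l a b) :
    (x : G ⧸ H) ∈ BSet (QRel lt H) (QRel u H) (QRel l H) a b := by
  rcases hx with (rfl | rfl) | ⟨-, hx⟩
  · exact .inl (.inl rfl)
  · exact .inl (.inr rfl)
  by_cases hxa : (x : G ⧸ H) = a
  · exact .inl (.inl hxa)
  by_cases hxb : (x : G ⧸ H) = b
  · exact .inl (.inr hxb)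
  refine .inr ⟨hab, (btwn_mk_iff hG hcc).mpr ?_⟩
  exact hx.restrict (p := fun x y : G => (x : G ⧸ H) ≠ y) (fun _ _ => Ne.symm) hab (Ne.symm hxa)
    (Ne.symm hxb)

theorem ORel.mk_quotient (hG : IsLeftInvSCExt lt u l) (hcc : CompletelyConvex lt u l H)
    {x c : G} (h : ORel lt u l x c) : ORel (QRel lt H) (QRel u H) (QRel l H) x c := by
  intro P hP Q hQ
  rcases eq_or_ne (x : G ⧸ H) c with hxc | hxc
  · rw [← hxc, bset_self, Set.mem_singleton_iff] at hP hQ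
    exact .inl (hP.trans hQ.symm)
  obtain ⟨p, rfl, hp⟩ := exists_mk_eq_of_mem_bset_mk hG hcc hP
  obtain ⟨q, rfl, hq⟩ := exists_mk_eq_of_mem_bset_mk hG hcc hQ
  rcases eq_or_ne (p : G ⧸ H) q with hpq | hpq
  · exact .inl hpq
  rcases h p hp q hq with rfl | hlt | hlt
  · exact .inl rfl
  · exact .inr (.inl (qrel_mk_of_ne hpq hlt))
  · exact .inr (.inr (qrel_mk_of_ne hpq.symm hlt))

theorem Rectifiable.quotient (hrect : Rectifiable lt u l) (hG : IsLeftInvSCExt lt u l)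
    (hcc : CompletelyConvex lt u l H) : Rectifiable (QRel lt H) (QRel u H) (QRel l H) := by
  classical
  intro A B hAB
  obtain ⟨a, rfl⟩ := QuotientGroup.mk_surjective A
  obtain ⟨b, rfl⟩ := QuotientGroup.mk_surjective B
  obtain ⟨F, hFB, hFO⟩ := hrect a b fun h => hAB (congrArg _ h)
  refine ⟨F.image (↑), ?_, fun X hX => ?_⟩
  · rw [Finset.coe_image]
    rintro _ ⟨c, hc, rfl⟩
    exact mk_mem_bset_mk hG hcc hAB (hFB hc)
  · obtain ⟨x, rfl, hx⟩ := exists_mk_eq_of_mem_bset_mk hG hcc hX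
    obtain ⟨c, hc, hxc⟩ := hFO x hx
    exact ⟨c, Finset.mem_image_of_mem _ hc, hxc.mk_quotient hG hcc⟩

end Normal

end Group

/-- The induced left-invariant partial order and simply connected extension on
`G ⧸ H` are rectifiable whenever the extension on `G` is. -/
theorem stmt11 {G : Type*} [Group G] (lt u l : G → G → Prop)
    (hirr : ∀ x : G, ¬ lt x x)
    (htrans : ∀ x y z : G, lt x y → lt y z → lt x z)
    (hltinv : LeftInvariant lt) (huinv : LeftInvariant u) (hlinv : LeftInvariant l)
    (hsce : IsSCExt lt u l)
    (hrect : Rectifiable lt u l)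
    (H : Subgroup G) [H.Normal]
    (hcc : CompletelyConvex lt u l H) :
    (∀ x : G ⧸ H, ¬ QRel lt H x x) ∧
    (∀ x y z : G ⧸ H, QRel lt H x y → QRel lt H y z → QRel lt H x z) ∧
    LeftInvariant (QRel lt H) ∧
    LeftInvariant (QRel u H) ∧
    LeftInvariant (QRel l H) ∧
    IsSCExt (QRel lt H) (QRel u H) (QRel l H) ∧
    Rectifiable (QRel lt H) (QRel u H) (QRel l H) := by
  have hG : IsLeftInvSCExt lt u l :=
    { hsce with
      irrefl := hirr, trans := htrans, lt_inv := hltinv, u_inv := huinv, l_inv := hlinv }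
  exact ⟨fun _ h => h.1 rfl, fun _ _ _ => qrel_lt_trans hG hcc, hltinv.qrel, huinv.qrel,
    hlinv.qrel, isSCExt_quotient hG hcc, hrect.quotient hG hcc⟩

end PaperSC
end
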